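/- arXiv:2401.15631 — 8 statements merged into one kernel-verified Lean document; each statement's English description precedes it below -/
import Mathlib

section
/- Let R be an SG ring, J an SG ideal of R, M an SG left R/J-module, N an SG left R-module, and let f_*(M) denote M regarded as an SG R-module via r·m := (r+J)·m with the same semigraduation. Then every homogeneous R-linear map g : f_*(M) → N takes its values in f^!(N), and composition with the inclusion f^!(N) ↪ N is a bijection from the set of homogeneous R/J-linear maps M → f^!(N) onto the set of homogeneous R-linear maps f_*(M) → N. -/
open Pointwise

namespace SG

/-- A semi-graded ring: an internal direct sum decomposition `R = ⊕ₙ Rₙ` into additive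
subgroups with `Rₘ·Rₙ ⊆ ⊕_{k ≤ m+n} R_k` and `1 ∈ R₀`. -/
def IsSGRing {R : Type*} [Ring R] (g : ℤ → AddSubgroup R) : Prop :=
  DirectSum.IsInternal g ∧
    (∀ m n : ℤ, ∀ a ∈ g m, ∀ b ∈ g n, a * b ∈ ⨆ k ≤ m + n, g k) ∧
    (1 : R) ∈ g 0

/-- A semi-graded module over a semi-graded ring. -/
def IsSGModule {R M : Type*} [Ring R] [AddCommGroup M] [Module R M]
    (gR : ℤ → AddSubgroup R) (gM : ℤ → AddSubgroup M) : Prop :=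
  DirectSum.IsInternal gM ∧
    ∀ m n : ℤ, 0 ≤ m → ∀ r ∈ gR m, ∀ x ∈ gM n, r • x ∈ ⨆ k ≤ m + n, gM k

/-- A submodule `P` is a semi-graded submodule when `P = ⊕ₙ (Mₙ ⊓ P)`. -/
def IsSGSubmodule {R M : Type*} [Ring R] [AddCommGroup M] [Module R M]
    (gM : ℤ → AddSubgroup M) (P : Submodule R M) : Prop :=
  P.toAddSubgroup = ⨆ n : ℤ, (gM n ⊓ P.toAddSubgroup)

/-- `⟨X⟩^SG`: the intersection of all semi-graded submodules containing `X`. -/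
def sgSpan {R M : Type*} [Ring R] [AddCommGroup M] [Module R M]
    (gM : ℤ → AddSubgroup M) (X : Set M) : Submodule R M :=
  sInf {P : Submodule R M | IsSGSubmodule gM P ∧ X ⊆ P}

/-- A (left) ideal is two-sided. -/
def IsTwoSided {R : Type*} [Ring R] (I : Ideal R) : Prop :=
  ∀ x ∈ I, ∀ r : R, x * r ∈ I

/-- `R_{≥t}`: the intersection of all two-sided semi-graded ideals containing `⊕_{k ≥ t} R_k`. -/
def geIdeal {R : Type*} [Ring R] (gR : ℤ → AddSubgroup R) (t : ℕ) : Ideal R :=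
  sInf {I : Ideal R | IsSGSubmodule gR I ∧ IsTwoSided I ∧
    ∀ k : ℤ, (t : ℤ) ≤ k → gR k ≤ I.toAddSubgroup}

/-- Powers of a (two-sided) ideal, `I⁰ = R`, `I^{n+1} = I·Iⁿ`. -/
def idealPow {R : Type*} [Ring R] (I : Ideal R) : ℕ → Ideal R
  | 0 => ⊤
  | n + 1 => Submodule.span R ((I : Set R) * (idealPow I n : Set R))

/-- `x` is a torsion element: `(R_{≥t})ⁿ • x = 0` for some `n, t ∈ ℕ`. -/
def IsTorsionElem {R : Type*} [Ring R] (gR : ℤ → AddSubgroup R)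
    {M : Type*} [AddCommGroup M] [Module R M] (x : M) : Prop :=
  ∃ t n : ℕ, ∀ y ∈ idealPow (geIdeal gR t) n, y • x = 0

/-- `R'_n`. -/
def RprimeN {R : Type*} [Ring R] (gR : ℤ → AddSubgroup R) (n : ℤ) : Set R :=
  {r : R | r ∈ gR n ∧ ∀ m : ℤ, ∀ h ∈ gR m, r * h ∈ gR (n + m)}

/-- `R' = ⋃ₙ R'_n`. -/
def Rprime {R : Type*} [Ring R] (gR : ℤ → AddSubgroup R) : Set R :=
  ⋃ n : ℤ, RprimeN gR n

/-- `R''_n`. -/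
def RdprimeN {R : Type*} [Ring R] (gR : ℤ → AddSubgroup R) (n : ℤ) : Set R :=
  {r : R | r ∈ RprimeN gR n ∧ ∀ m : ℤ, ∀ h ∈ gR m, h * r ∈ gR (n + m)}

/-- `R'' = ⋃ₙ R''_n`. -/
def Rdprime {R : Type*} [Ring R] (gR : ℤ → AddSubgroup R) : Set R :=
  ⋃ n : ℤ, RdprimeN gR n

/-- A multiplicatively closed set satisfying the left Ore condition. -/
def IsLeftOreSet {R : Type*} [Ring R] (T : Set R) : Prop :=
  (1 : R) ∈ T ∧ (∀ a ∈ T, ∀ b ∈ T, a * b ∈ T) ∧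
    ∀ r : R, ∀ s ∈ T, ∃ r' : R, ∃ s' ∈ T, s' * r = r' * s

/-- A good left Ore set. -/
def IsGoodOre {R : Type*} [Ring R] (gR : ℤ → AddSubgroup R) (T : Set R) : Prop :=
  IsLeftOreSet T ∧ T ⊆ Rdprime gR ∧
    ∀ s ∈ T, ∀ r ∈ Rprime gR, ∃ u ∈ Rprime gR, ∃ v ∈ T, u * s = v * r

/-- A (left) schematic semi-graded ring: positively semi-graded, left Noetherian, with a
finite family of non-trivial good left Ore sets satisfying the schematic condition. -/
def IsSchematic {R : Type*} [Ring R] (gR : ℤ → AddSubgroup R) : Prop :=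
  IsSGRing gR ∧ (∀ n : ℤ, n < 0 → gR n = ⊥) ∧ IsNoetherian R R ∧
    ∃ 𝒮 : Set (Set R), 𝒮.Finite ∧
      (∀ T ∈ 𝒮, IsGoodOre gR T ∧ ∃ x ∈ T, x ∈ ⨆ k ≥ (1 : ℤ), gR k) ∧
      ∀ xf : Set R → R, (∀ T ∈ 𝒮, xf T ∈ T) →
        ∃ t m : ℕ, (idealPow (geIdeal gR t) m : Set R) ⊆
          ↑(⨆ T ∈ 𝒮, Ideal.span {xf T})

/-- `f^!(M)`: the largest semi-graded submodule of `M` annihilated by `J`, realized as the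
sum of all semi-graded submodules annihilated by `J`. -/
def fShriek {R M : Type*} [Ring R] [AddCommGroup M] [Module R M]
    (gM : ℤ → AddSubgroup M) (J : Ideal R) : Submodule R M :=
  sSup {P : Submodule R M | IsSGSubmodule gM P ∧ ∀ j ∈ J, ∀ x ∈ P, j • x = 0}

/-- The induced semigraduation on a quotient module. -/
def quotGrade {R M : Type*} [Ring R] [AddCommGroup M] [Module R M]
    (gM : ℤ → AddSubgroup M) (K : Submodule R M) : ℤ → AddSubgroup (M ⧸ K) :=
  fun n => (gM n).map (K.mkQ : M →ₗ[R] M ⧸ K).toAddMonoidHom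

/-- Condition (*) on an ideal `J`. -/
def CondStar {R : Type*} [Ring R] (gR : ℤ → AddSubgroup R) (J : Ideal R) : Prop :=
  ∀ n t : ℕ, ∀ x ∈ J ⊓ idealPow (geIdeal gR t) n,
    ∃ nx tx : ℕ, ∀ y ∈ idealPow (geIdeal gR tx) nx,
      y * x ∈ Submodule.span R ((J : Set R) * (idealPow (geIdeal gR t) n : Set R))

/-- Localizable semi-graded module: `R'_n · M_m ⊆ M_{n+m}`. -/
def IsLSG {R M : Type*} [Ring R] [AddCommGroup M] [Module R M]
    (gR : ℤ → AddSubgroup R) (gM : ℤ → AddSubgroup M) : Prop :=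
  IsSGModule gR gM ∧
    ∀ n m : ℤ, ∀ r ∈ RprimeN gR n, ∀ x ∈ gM m, r • x ∈ gM (n + m)

universe v

/-- `E` is T-injective (in the category of all modules): maps into `E` from a submodule with
torsion quotient extend. -/
def TInjective {R : Type*} [Ring R] (gR : ℤ → AddSubgroup R)
    (E : Type*) [AddCommGroup E] [Module R E] : Prop :=
  ∀ (M : Type v) [AddCommGroup M] [Module R M] (P : Submodule R M),
    (∀ x : M ⧸ P, IsTorsionElem gR x) →
      ∀ f : P →ₗ[R] E, ∃ g : M →ₗ[R] E, ∀ x : P, g (x : M) = f x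

/-- `E` is T-injective within the category of LSG modules and homogeneous maps. -/
def TInjectiveLSG {R : Type*} [Ring R] (gR : ℤ → AddSubgroup R)
    {E : Type*} [AddCommGroup E] [Module R E] (gE : ℤ → AddSubgroup E) : Prop :=
  ∀ (M : Type v) [AddCommGroup M] [Module R M] (gM : ℤ → AddSubgroup M),
    IsLSG gR gM →
    ∀ P : Submodule R M, IsSGSubmodule gM P →
      (∀ x : M ⧸ P, IsTorsionElem gR x) →
      ∀ f : P →ₗ[R] E, (∀ n : ℤ, ∀ x : P, (x : M) ∈ gM n → f x ∈ gE n) →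
        ∃ g : M →ₗ[R] E, (∀ x : P, g (x : M) = f x) ∧
          ∀ n : ℤ, ∀ x ∈ gM n, g x ∈ gE n

end SG

set_option synthInstance.maxHeartbeats 1000000 in
private lemma mem_iSup_of_internal {M : Type*} [AddCommGroup M] (A : ℤ → AddSubgroup M)
    (h : DirectSum.IsInternal A) (m : M) : m ∈ ⨆ n, A n := by
  obtain ⟨x, rfl⟩ := h.surjective m
  induction x using DirectSum.induction_on with
  | zero => simp [AddSubgroup.zero_mem]
  | of i y =>
      rw [DirectSum.coeAddMonoidHom_of]
      exact AddSubgroup.mem_iSup_of_mem i y.2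
  | add a b ha hb =>
      rw [map_add]
      exact AddSubgroup.add_mem _ ha hb

/-- the adjunction `(f_*, f^!)`.  Here `R/J` is modelled by a surjective
homogeneous ring homomorphism `π : R → S` with kernel `J`, `M` is an SG `S`-module
(so `f_*(M)` is `M` with the `R`-action `r • m := π r • m`), and `N` is an SG `R`-module. -/
theorem stmt_1 {R S M N : Type*} [Ring R] [Ring S]
    [AddCommGroup M] [Module S M] [AddCommGroup N] [Module R N]
    (gR : ℤ → AddSubgroup R) (gS : ℤ → AddSubgroup S)
    (gM : ℤ → AddSubgroup M) (gN : ℤ → AddSubgroup N)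
    (hR : SG.IsSGRing gR) (π : R →+* S) (hπ : Function.Surjective π)
    (hgS : ∀ n : ℤ, gS n = (gR n).map π.toAddMonoidHom)
    (J : Ideal R) (hJ : J = RingHom.ker π) (hJsg : SG.IsSGSubmodule gR J)
    (hM : SG.IsSGModule gS gM) (hN : SG.IsSGModule gR gN) :
    (∀ g : M →+ N, (∀ (r : R) (m : M), g (π r • m) = r • g m) →
        (∀ n : ℤ, ∀ x ∈ gM n, g x ∈ gN n) →
        ∀ m : M, g m ∈ SG.fShriek gN J) ∧
    Set.BijOn
      (fun h : M →+ ↥(SG.fShriek gN J) =>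
        ((SG.fShriek gN J).subtype.toAddMonoidHom).comp h)
      {h : M →+ ↥(SG.fShriek gN J) |
        (∀ (r : R) (m : M), ((h (π r • m) : N)) = r • (h m : N)) ∧
        ∀ n : ℤ, ∀ x ∈ gM n, (h x : N) ∈ gN n}
      {g : M →+ N |
        (∀ (r : R) (m : M), g (π r • m) = r • g m) ∧
        ∀ n : ℤ, ∀ x ∈ gM n, g x ∈ gN n} := by
  classical
  -- Key claim: every homogeneous R-linear g : M → N lands in fShriek gN J.
  have key : ∀ g : M →+ N, (∀ (r : R) (m : M), g (π r • m) = r • g m) →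
      (∀ n : ℤ, ∀ x ∈ gM n, g x ∈ gN n) →
      ∀ m : M, g m ∈ SG.fShriek gN J := by
    intro g hlin hgr m
    -- the range of g as an R-submodule of N
    set P : Submodule R N :=
      { carrier := Set.range g
        add_mem' := by rintro _ _ ⟨a, rfl⟩ ⟨b, rfl⟩; exact ⟨a + b, map_add g a b⟩
        zero_mem' := ⟨0, map_zero g⟩
        smul_mem' := by
          rintro r _ ⟨a, rfl⟩
          exact ⟨π r • a, hlin r a⟩ } with hP
    have hPsg : SG.IsSGSubmodule gN P := by
      refine le_antisymm ?_ (iSup_le fun n => inf_le_right)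
      rintro _ ⟨a, rfl⟩
      have ha : a ∈ ⨆ n, gM n := mem_iSup_of_internal gM hM.1 a
      have hle : (⨆ n, gM n) ≤
          AddSubgroup.comap g (⨆ n, gN n ⊓ P.toAddSubgroup) := by
        refine iSup_le fun n x hx => ?_
        exact AddSubgroup.mem_iSup_of_mem n ⟨hgr n x hx, ⟨x, rfl⟩⟩
      exact hle ha
    have hann : ∀ j ∈ J, ∀ x ∈ P, j • x = 0 := by
      rintro j hj _ ⟨a, rfl⟩
      have hj0 : π j = 0 := by rwa [hJ, RingHom.mem_ker] at hj
      rw [← hlin j a, hj0, zero_smul, map_zero]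
    have : P ≤ SG.fShriek gN J := le_sSup ⟨hPsg, hann⟩
    exact this ⟨m, rfl⟩
  refine ⟨key, ?_, ?_, ?_⟩
  · -- MapsTo
    rintro h ⟨h1, h2⟩
    exact ⟨h1, h2⟩
  · -- InjOn
    intro h1 _ h2 _ heq
    ext m
    exact DFunLike.congr_fun heq m
  · -- SurjOn
    rintro g ⟨hlin, hgr⟩
    refine ⟨{ toFun := fun m => ⟨g m, key g hlin hgr m⟩
              map_zero' := Subtype.ext (map_zero g)
              map_add' := fun a b => Subtype.ext (map_add g a b) }, ⟨?_, ?_⟩, ?_⟩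
    · intro r m; exact hlin r m
    · intro n x hx; exact hgr n x hx
    · ext m; rfl
end

section
/- Let R be an SG ring, J an SG ideal of R, M an SG left R-module, and N an SG left R/J-module, and let f_*(N) denote N regarded as an SG R-module via r·n := (r+J)·n with the same semigraduation. Then every homogeneous R-linear map h : M → f_*(N) vanishes on ⟨J·M⟩^SG, and composition with the quotient map M → f^*(M) := M/⟨J·M⟩^SG is a bijection from the set of homogeneous R/J-linear maps f^*(M) → N onto the set of homogeneous R-linear maps M → f_*(N). -/
open Pointwise

/-! The kernel of a homogeneous map between semi-graded modules is an SG submodule: the images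
of the homogeneous components of an element of the kernel are the homogeneous components of `0`.
If the map is `R`-linear into `f_*(N)`, that kernel contains `J·M`, hence `⟨J·M⟩^SG`, and the
universal property of the quotient `M → f^*(M)` gives the bijection. -/

theorem DirectSum.IsInternal.ker_le_iSup_inf_ker {ι M N : Type*} [DecidableEq ι]
    [AddCommGroup M] [AddCommGroup N] {gM : ι → AddSubgroup M} {gN : ι → AddSubgroup N}
    (hM : DirectSum.IsInternal gM) (hN : DirectSum.IsInternal gN) (h : M →+ N)
    (hh : ∀ n, ∀ x ∈ gM n, h x ∈ gN n) : h.ker ≤ ⨆ n, gM n ⊓ h.ker := by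
  classical
  intro z hz
  obtain ⟨a, rfl⟩ := hM.2 z
  let b : DirectSum ι (fun n => gN n) :=
    DFinsupp.mapRange (fun n (x : gM n) => (⟨h x, hh n x x.2⟩ : gN n)) (fun n => by ext; simp) a
  have hcoe_b : DirectSum.coeAddMonoidHom gN b = h (DirectSum.coeAddMonoidHom gM a) := by
    rw [DirectSum.coeAddMonoidHom_eq_dfinsuppSum, DirectSum.coeAddMonoidHom_eq_dfinsuppSum,
      DFinsupp.sum_mapRange_index (fun n => by simp), map_dfinsuppSum]
  -- The components `h (a n) ∈ gN n` sum to `h z = 0`, so independence of the `gN n` kills each.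
  have hb : b = 0 := hN.1 (by rw [map_zero, hcoe_b, hz])
  have h_comp : ∀ n, h (a n) = 0 := fun n => congrArg Subtype.val (DFunLike.congr_fun hb n)
  rw [DirectSum.coeAddMonoidHom_eq_dfinsuppSum]
  exact dfinsuppSum_mem _ a _ fun n _ =>
    le_iSup (fun n => gM n ⊓ h.ker) n ⟨(a n).2, h_comp n⟩

namespace SG

variable {R S M N : Type*} [Ring R] [Ring S] [AddCommGroup M] [Module R M]
  [AddCommGroup N] [Module S N]

/-- The homogeneous `R`-linear maps `M → f_*(N)`, where `R` acts on `N` through `σ`. -/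
def homogeneousMaps (σ : R →+* S) (gM : ℤ → AddSubgroup M) (gN : ℤ → AddSubgroup N) :
    Set (M →+ N) :=
  {h | (∀ (r : R) (m : M), h (r • m) = σ r • h m) ∧ ∀ n : ℤ, ∀ x ∈ gM n, h x ∈ gN n}

theorem sgSpan_le {gM : ℤ → AddSubgroup M} {X : Set M} {P : Submodule R M}
    (hP : IsSGSubmodule gM P) (hX : X ⊆ P) : sgSpan gM X ≤ P :=
  sInf_le ⟨hP, hX⟩

theorem isSGSubmodule_ker {σ : R →+* S} {gM : ℤ → AddSubgroup M} {gN : ℤ → AddSubgroup N}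
    (hM : DirectSum.IsInternal gM) (hN : DirectSum.IsInternal gN) (f : M →ₛₗ[σ] N)
    (hf : ∀ n : ℤ, ∀ x ∈ gM n, f x ∈ gN n) : IsSGSubmodule gM (LinearMap.ker f) :=
  le_antisymm (hM.ker_le_iSup_inf_ker hN f.toAddMonoidHom hf) (iSup_le fun _ => inf_le_right)

theorem map_eq_zero_of_mem_sgSpan {σ : R →+* S} {gM : ℤ → AddSubgroup M}
    {gN : ℤ → AddSubgroup N} (hM : DirectSum.IsInternal gM) (hN : DirectSum.IsInternal gN)
    {J : Ideal R} (hJ : J ≤ RingHom.ker σ)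
    {h : M →+ N} (hh : h ∈ homogeneousMaps σ gM gN) :
    ∀ m ∈ sgSpan (R := R) gM ((J : Set R) • (Set.univ : Set M)), h m = 0 := by
  let f : M →ₛₗ[σ] N := { h with map_smul' := hh.1 }
  refine sgSpan_le (P := LinearMap.ker f) (isSGSubmodule_ker hM hN f hh.2) ?_
  rintro _ ⟨j, hj, m, -, rfl⟩
  change h (j • m) = 0
  rw [hh.1, RingHom.mem_ker.mp (hJ hj), zero_smul]

theorem bijOn_comp_mkQ {σ : R →+* S} {gM : ℤ → AddSubgroup M} {gN : ℤ → AddSubgroup N}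
    (K : Submodule R M) (hK : ∀ h ∈ homogeneousMaps σ gM gN, ∀ m ∈ K, h m = 0) :
    Set.BijOn (fun g : (M ⧸ K) →+ N => g.comp K.mkQ.toAddMonoidHom)
      (homogeneousMaps σ (quotGrade gM K) gN) (homogeneousMaps σ gM gN) := by
  refine ⟨?mapsTo, ?injOn, ?surjOn⟩
  case mapsTo =>
    rintro g ⟨hg_smul, hg_hom⟩
    exact ⟨fun r m => hg_smul r (K.mkQ m), fun n x hx => hg_hom n (K.mkQ x) ⟨x, hx, rfl⟩⟩
  case injOn =>
    intro g₁ _ g₂ _ heq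
    ext x
    obtain ⟨m, rfl⟩ := K.mkQ_surjective x
    exact DFunLike.congr_fun heq m
  case surjOn =>
    rintro h hh
    let f : M →ₛₗ[σ] N := { h with map_smul' := hh.1 }
    let g := K.liftQ f (hK h hh)
    refine ⟨g.toAddMonoidHom, ⟨g.map_smulₛₗ, ?_⟩, rfl⟩
    rintro n _ ⟨y, hy, rfl⟩
    exact hh.2 n y hy

end SG

/-- `R/J` is modelled by a ring homomorphism `π : R → S` with kernel `J`, and `f_*(N)` is `N`
with `r • n := π r • n`. -/
theorem stmt_2_general {R S M N : Type*} [Ring R] [Ring S]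
    [AddCommGroup M] [Module R M] [AddCommGroup N] [Module S N]
    (gR : ℤ → AddSubgroup R) (gS : ℤ → AddSubgroup S)
    (gM : ℤ → AddSubgroup M) (gN : ℤ → AddSubgroup N)
    (π : R →+* S)
    (J : Ideal R) (hJ : J = RingHom.ker π)
    (hM : SG.IsSGModule gR gM) (hN : SG.IsSGModule gS gN) :
    (∀ h : M →+ N, (∀ (r : R) (m : M), h (r • m) = π r • h m) →
        (∀ n : ℤ, ∀ x ∈ gM n, h x ∈ gN n) →
        ∀ m ∈ SG.sgSpan (R := R) gM ((J : Set R) • (Set.univ : Set M)), h m = 0) ∧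
    Set.BijOn
      (fun g : (M ⧸ SG.sgSpan (R := R) gM ((J : Set R) • (Set.univ : Set M))) →+ N =>
        g.comp (SG.sgSpan (R := R) gM ((J : Set R) • (Set.univ : Set M))).mkQ.toAddMonoidHom)
      {g : (M ⧸ SG.sgSpan (R := R) gM ((J : Set R) • (Set.univ : Set M))) →+ N |
        (∀ (r : R) (x : M ⧸ SG.sgSpan (R := R) gM ((J : Set R) • (Set.univ : Set M))),
          g (r • x) = π r • g x) ∧
        ∀ n : ℤ, ∀ x ∈ SG.quotGrade (R := R) gM (SG.sgSpan (R := R) gM ((J : Set R) • (Set.univ : Set M))) n,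
          g x ∈ gN n}
      {h : M →+ N |
        (∀ (r : R) (m : M), h (r • m) = π r • h m) ∧
        ∀ n : ℤ, ∀ x ∈ gM n, h x ∈ gN n} := by
  have vanishes : ∀ h ∈ SG.homogeneousMaps π gM gN,
      ∀ m ∈ SG.sgSpan (R := R) gM ((J : Set R) • (Set.univ : Set M)), h m = 0 :=
    fun _ hh => SG.map_eq_zero_of_mem_sgSpan hM.1 hN.1 hJ.le hh
  exact ⟨fun h h_smul h_hom => vanishes h ⟨h_smul, h_hom⟩, SG.bijOn_comp_mkQ _ vanishes⟩

/-- the adjunction `(f^*, f_*)`.  Here `R/J` is modelled by a surjective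
homogeneous ring homomorphism `π : R → S` with kernel `J`; `M` is an SG `R`-module,
`N` is an SG `S`-module (so `f_*(N)` is `N` with `r • n := π r • n`), and
`f^*(M) = M / ⟨J·M⟩^SG`. -/
theorem stmt_2 {R S M N : Type*} [Ring R] [Ring S]
    [AddCommGroup M] [Module R M] [AddCommGroup N] [Module S N]
    (gR : ℤ → AddSubgroup R) (gS : ℤ → AddSubgroup S)
    (gM : ℤ → AddSubgroup M) (gN : ℤ → AddSubgroup N)
    (hR : SG.IsSGRing gR) (π : R →+* S) (hπ : Function.Surjective π)
    (hgS : ∀ n : ℤ, gS n = (gR n).map π.toAddMonoidHom)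
    (J : Ideal R) (hJ : J = RingHom.ker π) (hJsg : SG.IsSGSubmodule gR J)
    (hM : SG.IsSGModule gR gM) (hN : SG.IsSGModule gS gN) :
    (∀ h : M →+ N, (∀ (r : R) (m : M), h (r • m) = π r • h m) →
        (∀ n : ℤ, ∀ x ∈ gM n, h x ∈ gN n) →
        ∀ m ∈ SG.sgSpan (R := R) gM ((J : Set R) • (Set.univ : Set M)), h m = 0) ∧
    Set.BijOn
      (fun g : (M ⧸ SG.sgSpan (R := R) gM ((J : Set R) • (Set.univ : Set M))) →+ N =>
        g.comp (SG.sgSpan (R := R) gM ((J : Set R) • (Set.univ : Set M))).mkQ.toAddMonoidHom)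
      {g : (M ⧸ SG.sgSpan (R := R) gM ((J : Set R) • (Set.univ : Set M))) →+ N |
        (∀ (r : R) (x : M ⧸ SG.sgSpan (R := R) gM ((J : Set R) • (Set.univ : Set M))),
          g (r • x) = π r • g x) ∧
        ∀ n : ℤ, ∀ x ∈ SG.quotGrade (R := R) gM (SG.sgSpan (R := R) gM ((J : Set R) • (Set.univ : Set M))) n,
          g x ∈ gN n}
      {h : M →+ N |
        (∀ (r : R) (m : M), h (r • m) = π r • h m) ∧
        ∀ n : ℤ, ∀ x ∈ gM n, h x ∈ gN n} :=
  stmt_2_general gR gS gM gN π J hJ hM hN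
end

section
/- Let R be a schematic SG ring and J a compatible SG ideal of R. Then the quotient ring R/J, with semigraduation (R/J)_n = (R_n + J)/J, is a schematic ring. -/
open Pointwise

section AuxProj

set_option synthInstance.maxHeartbeats 1000000
set_option maxHeartbeats 2000000

open DirectSum

variable {M : Type*} [AddCommGroup M] {gM : ℤ → AddSubgroup M}

/-- The `n`-th homogeneous component projection coming from an internal direct sum
decomposition. -/
noncomputable def sgProj (hM : DirectSum.IsInternal gM) (n : ℤ) : M →+ M :=
  AddMonoidHom.mk'
    (fun x => ((AddEquiv.ofBijective (DirectSum.coeAddMonoidHom gM) hM).symm x n : M))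
    (by
      intro a b
      dsimp only
      rw [map_add, DirectSum.add_apply, AddSubgroup.coe_add])

lemma sgProj_mem (hM : DirectSum.IsInternal gM) (n : ℤ) (x : M) :
    sgProj hM n x ∈ gM n := SetLike.coe_mem _

lemma sgProj_of_mem (hM : DirectSum.IsInternal gM) {k : ℤ} {x : M} (hx : x ∈ gM k) (n : ℤ) :
    sgProj hM n x = if k = n then x else 0 := by
  have he : (AddEquiv.ofBijective (DirectSum.coeAddMonoidHom gM) hM).symm x
      = DirectSum.of (fun i => ↥(gM i)) k ⟨x, hx⟩ := by
    rw [AddEquiv.symm_apply_eq]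
    exact (DirectSum.coeAddMonoidHom_of gM k ⟨x, hx⟩).symm
  show ((AddEquiv.ofBijective (DirectSum.coeAddMonoidHom gM) hM).symm x n : M) = _
  rw [he, DirectSum.of_apply]
  by_cases h : k = n
  · subst h; simp
  · simp [h]

lemma sgProj_eq_coe (hM : DirectSum.IsInternal gM) (n : ℤ) (x : M) :
    sgProj hM n x
      = ((AddEquiv.ofBijective (DirectSum.coeAddMonoidHom gM) hM).symm x n : M) := rfl

lemma sgProj_sum_mem (hM : DirectSum.IsInternal gM) (x : M) {N : AddSubgroup M}
    (h : ∀ n, sgProj hM n x ∈ N) : x ∈ ⨆ n : ℤ, (gM n ⊓ N) := by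
  classical
  set e := AddEquiv.ofBijective (DirectSum.coeAddMonoidHom gM) hM with he
  have hx : x = ∑ n ∈ DFinsupp.support (e.symm x), sgProj hM n x := by
    conv_lhs => rw [← e.apply_symm_apply x, ← DirectSum.sum_support_of (e.symm x)]
    rw [map_sum]
    refine Finset.sum_congr rfl fun n _ => ?_
    show e _ = _
    rw [he]
    erw [AddEquiv.ofBijective_apply]
    rw [DirectSum.coeAddMonoidHom_of]
    rfl
  rw [hx]
  refine AddSubgroup.sum_mem _ fun n _ => ?_
  exact (le_iSup (fun n : ℤ => gM n ⊓ N) n) ⟨sgProj_mem hM n x, h n⟩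

lemma sgProj_extract (hM : DirectSum.IsInternal gM) {N : AddSubgroup M} {x : M}
    (hx : x ∈ ⨆ n : ℤ, (gM n ⊓ N)) (n : ℤ) : sgProj hM n x ∈ N := by
  revert n
  refine AddSubgroup.iSup_induction (fun n : ℤ => gM n ⊓ N)
    (C := fun y => ∀ n, sgProj hM n y ∈ N) hx ?_ ?_ ?_
  · intro k y hy n
    rw [sgProj_of_mem hM hy.1 n]
    split
    · exact hy.2
    · exact N.zero_mem
  · intro n; rw [map_zero]; exact N.zero_mem
  · intro a b ha hb n; rw [map_add]; exact N.add_mem (ha n) (hb n)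

end AuxProj

section AuxIdeal

variable {R S : Type*} [Ring R] [Ring S]

lemma sg_idealPow_mono {I J : Ideal R} (h : I ≤ J) :
    ∀ m : ℕ, SG.idealPow I m ≤ SG.idealPow J m
  | 0 => le_rfl
  | (m + 1) => by
      show Submodule.span R _ ≤ Submodule.span R _
      refine Submodule.span_mono (Set.mul_subset_mul h ?_)
      exact SetLike.coe_subset_coe.mpr (sg_idealPow_mono h m)

lemma sg_idealPow_map_le (π : R →+* S) (hπ : Function.Surjective π) (I : Ideal R) :
    ∀ m : ℕ, SG.idealPow (Ideal.map π I) m ≤ Ideal.map π (SG.idealPow I m)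
  | 0 => by
      show (⊤ : Ideal S) ≤ Ideal.map π ⊤
      rw [Ideal.map_top]
  | (m + 1) => by
      show Submodule.span S _ ≤ _
      rw [Submodule.span_le]
      rintro z ⟨a, ha, b, hb, rfl⟩
      obtain ⟨xa, hxa, rfl⟩ := (Ideal.mem_map_iff_of_surjective π hπ).mp ha
      have hb' : b ∈ Ideal.map π (SG.idealPow I m) := sg_idealPow_map_le π hπ I m hb
      obtain ⟨xb, hxb, rfl⟩ := (Ideal.mem_map_iff_of_surjective π hπ).mp hb'
      have hmem : π (xa * xb) ∈ Ideal.map π (SG.idealPow I (m + 1)) :=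
        Ideal.mem_map_of_mem π (Submodule.subset_span (Set.mul_mem_mul hxa hxb))
      simpa [map_mul] using hmem

end AuxIdeal

set_option synthInstance.maxHeartbeats 1000000
set_option maxHeartbeats 2000000

/-- a quotient of a schematic ring by a compatible SG ideal is schematic.
Here `R/J` is modelled by a surjective ring homomorphism `π : R → S` whose kernel is an
SG ideal, `S` carrying the quotient semigraduation `gS n = π(gR n)`; compatibility says
`π(R') = S'`. -/
theorem stmt_3 {R S : Type*} [Ring R] [Ring S]
    (gR : ℤ → AddSubgroup R) (gS : ℤ → AddSubgroup S)
    (π : R →+* S) (hπ : Function.Surjective π)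
    (hgS : ∀ n : ℤ, gS n = (gR n).map π.toAddMonoidHom)
    (hJsg : SG.IsSGSubmodule gR (RingHom.ker π))
    (hsch : SG.IsSchematic gR)
    (hcomp : π '' SG.Rprime gR = SG.Rprime gS) :
    SG.IsSchematic gS := by
  classical
  obtain ⟨⟨hint, hmulR, honeR⟩, hpos, hnoeth, 𝒮, h𝒮fin, h𝒮good, h𝒮sch⟩ := hsch
  -- map of a bounded iSup of subgroups
  have hmap_biSup : ∀ (p : ℤ → Prop) (A : ℤ → AddSubgroup R),
      AddSubgroup.map π.toAddMonoidHom (⨆ k, ⨆ _ : p k, A k)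
        = ⨆ k, ⨆ _ : p k, AddSubgroup.map π.toAddMonoidHom (A k) := by
    intro p A
    rw [(AddSubgroup.gc_map_comap π.toAddMonoidHom).l_iSup]
    exact iSup_congr fun k => (AddSubgroup.gc_map_comap π.toAddMonoidHom).l_iSup
  -- the quotient semigraduation is an internal direct sum
  have hSsurj : Function.Surjective (DirectSum.coeAddMonoidHom gS) := by
    intro s
    obtain ⟨x, rfl⟩ := hπ s
    have hx : x ∈ ⨆ n : ℤ, (gR n ⊓ (⊤ : AddSubgroup R)) :=
      sgProj_sum_mem hint x fun n => AddSubgroup.mem_top _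
    refine AddSubgroup.iSup_induction (fun n : ℤ => gR n ⊓ ⊤)
      (C := fun y => ∃ f, DirectSum.coeAddMonoidHom gS f = π y) hx ?_ ?_ ?_
    · intro n y hy
      refine ⟨DirectSum.of (fun i => ↥(gS i)) n
        ⟨π y, by rw [hgS]; exact AddSubgroup.mem_map_of_mem _ hy.1⟩, ?_⟩
      rw [DirectSum.coeAddMonoidHom_of]
    · exact ⟨0, by simp⟩
    · rintro a b ⟨f, hf⟩ ⟨g, hg⟩
      exact ⟨f + g, by rw [map_add, hf, hg, map_add]⟩
  have hSinj : Function.Injective (DirectSum.coeAddMonoidHom gS) := by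
    rw [injective_iff_map_eq_zero]
    intro f hf
    have hmem : ∀ n : ℤ, ∃ r ∈ gR n, π r = (f n : S) := by
      intro n
      have h2 : ((f n : S)) ∈ gS n := (f n).2
      revert h2
      generalize ((f n : S)) = y
      intro h2
      rw [hgS] at h2
      exact AddSubgroup.mem_map.mp h2
    choose r hr hπr using hmem
    set x := ∑ m ∈ DFinsupp.support f, r m with hxdef
    have hπx : π x = 0 := by
      rw [hxdef, map_sum, Finset.sum_congr rfl fun m _ => hπr m]
      have hcalc : ∑ m ∈ DFinsupp.support f, ((f m : S))
          = DirectSum.coeAddMonoidHom gS f := by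
        conv_rhs => rw [← DirectSum.sum_support_of f]
        rw [map_sum]
        exact Finset.sum_congr rfl fun m _ => (DirectSum.coeAddMonoidHom_of gS m (f m)).symm
      rw [hcalc, hf]
    have hxker : x ∈ ⨆ n : ℤ, (gR n ⊓ (RingHom.ker π).toAddSubgroup) := by
      rw [← hJsg]
      exact RingHom.mem_ker.mpr hπx
    have hproj : ∀ n, sgProj hint n x ∈ (RingHom.ker π).toAddSubgroup :=
      fun n => sgProj_extract hint hxker n
    refine DFinsupp.ext fun n => ?_
    by_cases hn : n ∈ DFinsupp.support f
    · have hxproj : sgProj hint n x = r n := by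
        rw [hxdef, map_sum, Finset.sum_congr rfl fun m _ => sgProj_of_mem hint (hr m) n,
          Finset.sum_ite_eq' (DFinsupp.support f) n r, if_pos hn]
      have h0 : π (r n) = 0 := by
        have := hproj n
        rw [hxproj] at this
        exact this
      have : (f n : S) = 0 := by rw [← hπr n, h0]
      exact Subtype.ext this
    · exact DFinsupp.notMem_support_iff.mp hn
  have hSint : DirectSum.IsInternal gS := ⟨hSinj, hSsurj⟩
  -- basic geIdeal facts over R
  have h_geSG : ∀ t : ℕ, SG.IsSGSubmodule gR (SG.geIdeal gR t) := by
    intro t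
    apply le_antisymm
    · intro x hx
      refine sgProj_sum_mem hint x fun n => ?_
      have hx' : x ∈ SG.geIdeal gR t := hx
      simp only [Submodule.mem_toAddSubgroup, SG.geIdeal, Submodule.mem_sInf]
      intro J hJ
      have hx'' : x ∈ sInf {I : Ideal R | SG.IsSGSubmodule gR I ∧ SG.IsTwoSided I ∧
          ∀ k : ℤ, (t : ℤ) ≤ k → gR k ≤ I.toAddSubgroup} := hx'
      have hxJ : x ∈ J.toAddSubgroup := Submodule.mem_sInf.mp hx'' J hJ
      rw [hJ.1] at hxJ
      exact sgProj_extract hint hxJ n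
    · exact iSup_le fun n => inf_le_right
  have h_ge2 : ∀ t : ℕ, SG.IsTwoSided (SG.geIdeal gR t) := by
    intro t x hx rr
    simp only [SG.geIdeal, Submodule.mem_sInf] at hx ⊢
    intro J hJ
    exact hJ.2.1 x (hx J hJ) rr
  have h_geK : ∀ t : ℕ, ∀ k : ℤ, (t : ℤ) ≤ k →
      gR k ≤ (SG.geIdeal gR t).toAddSubgroup := by
    intro t k hk x hx
    simp only [Submodule.mem_toAddSubgroup, SG.geIdeal, Submodule.mem_sInf]
    intro J hJ
    exact hJ.2.2 k hk hx
  have hmapset : ∀ I : Ideal R,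
      (Ideal.map π I).toAddSubgroup = AddSubgroup.map π.toAddMonoidHom I.toAddSubgroup := by
    intro I
    ext y
    constructor
    · intro hy
      obtain ⟨x, hx, rfl⟩ := (Ideal.mem_map_iff_of_surjective π hπ).mp hy
      exact ⟨x, hx, rfl⟩
    · rintro ⟨x, hx, rfl⟩
      exact Ideal.mem_map_of_mem π hx
  have geLe : ∀ t : ℕ, SG.geIdeal gS t ≤ Ideal.map π (SG.geIdeal gR t) := by
    intro t
    show sInf _ ≤ _
    refine sInf_le (⟨?_, ?_, ?_⟩ :
      Ideal.map π (SG.geIdeal gR t) ∈ {I : Ideal S | SG.IsSGSubmodule gS I ∧ SG.IsTwoSided I ∧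
        ∀ k : ℤ, (t : ℤ) ≤ k → gS k ≤ I.toAddSubgroup})
    · -- SG submodule
      apply le_antisymm
      · conv_lhs => rw [hmapset, h_geSG t]
        rw [(AddSubgroup.gc_map_comap π.toAddMonoidHom).l_iSup]
        refine iSup_le fun n => le_trans (le_inf ?_ ?_)
          (le_iSup (fun n : ℤ => gS n ⊓ (Ideal.map π (SG.geIdeal gR t)).toAddSubgroup) n)
        · rw [hgS]; exact AddSubgroup.map_mono inf_le_left
        · rw [hmapset]; exact AddSubgroup.map_mono inf_le_right
      · exact iSup_le fun n => inf_le_right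
    · -- two-sided
      intro x hx rr
      obtain ⟨a, ha, rfl⟩ := (Ideal.mem_map_iff_of_surjective π hπ).mp hx
      obtain ⟨b, rfl⟩ := hπ rr
      rw [← map_mul]
      exact Ideal.mem_map_of_mem π (h_ge2 t a ha b)
    · -- contains gS k for k ≥ t
      intro k hk
      rw [hgS, hmapset]
      exact AddSubgroup.map_mono (h_geK t k hk)
  -- images of primes
  have hRprimeN : ∀ n : ℤ, ∀ r ∈ SG.RprimeN gR n, π r ∈ SG.RprimeN gS n := by
    rintro n r ⟨hr1, hr2⟩
    refine ⟨by rw [hgS]; exact AddSubgroup.mem_map_of_mem _ hr1, ?_⟩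
    intro m h hh
    rw [hgS] at hh
    obtain ⟨h', hh', rfl⟩ := AddSubgroup.mem_map.mp hh
    have key : π (r * h') ∈ gS (n + m) := by
      rw [hgS]; exact AddSubgroup.mem_map_of_mem _ (hr2 m h' hh')
    simpa [map_mul] using key
  have hRdmap : ∀ r ∈ SG.Rdprime gR, π r ∈ SG.Rdprime gS := by
    intro r hr
    obtain ⟨_, ⟨n, rfl⟩, ⟨hr1, hr2⟩⟩ := hr
    refine Set.mem_iUnion.mpr ⟨n, hRprimeN n r hr1, ?_⟩
    intro m h hh
    rw [hgS] at hh
    obtain ⟨h', hh', rfl⟩ := AddSubgroup.mem_map.mp hh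
    have key : π (h' * r) ∈ gS (n + m) := by
      rw [hgS]; exact AddSubgroup.mem_map_of_mem _ (hr2 m h' hh')
    simpa [map_mul] using key
  -- assemble
  refine ⟨⟨hSint, ?_, ?_⟩, ?_, ?_, ?_⟩
  · -- multiplication
    intro m n a ha b hb
    rw [hgS] at ha hb
    obtain ⟨a', ha', rfl⟩ := AddSubgroup.mem_map.mp ha
    obtain ⟨b', hb', rfl⟩ := AddSubgroup.mem_map.mp hb
    have hm : π (a' * b') ∈ AddSubgroup.map π.toAddMonoidHom (⨆ k, ⨆ _ : k ≤ m + n, gR k) :=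
      AddSubgroup.mem_map_of_mem _ (hmulR m n a' ha' b' hb')
    rw [hmap_biSup] at hm
    simp only [← hgS] at hm
    simpa [map_mul] using hm
  · -- one
    rw [hgS]
    exact ⟨1, honeR, map_one π⟩
  · -- positivity
    intro n hn
    rw [hgS, hpos n hn, AddSubgroup.map_bot]
  · -- Noetherian
    haveI : IsNoetherianRing R := isNoetherianRing_iff.mpr hnoeth
    exact isNoetherianRing_iff.mp (isNoetherianRing_of_surjective R S π hπ)
  · -- the family of Ore sets
    refine ⟨(fun T => π '' T) '' 𝒮, h𝒮fin.image _, ?_, ?_⟩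
    · rintro T' ⟨T, hT, rfl⟩
      obtain ⟨⟨hOre, hsub, hgood⟩, x, hxT, hxpos⟩ := h𝒮good T hT
      constructor
      · refine ⟨⟨⟨1, hOre.1, map_one π⟩, ?_, ?_⟩, ?_, ?_⟩
        · rintro a ⟨a0, ha0, rfl⟩ b ⟨b0, hb0, rfl⟩
          exact ⟨a0 * b0, hOre.2.1 a0 ha0 b0 hb0, map_mul π a0 b0⟩
        · rintro rr ss ⟨s0, hs0, rfl⟩
          obtain ⟨r0, rfl⟩ := hπ rr
          obtain ⟨r', s', hs', heq⟩ := hOre.2.2 r0 s0 hs0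
          exact ⟨π r', π s', ⟨s', hs', rfl⟩, by rw [← map_mul, ← map_mul, heq]⟩
        · rintro ss ⟨s0, hs0, rfl⟩
          exact hRdmap _ (hsub hs0)
        · rintro ss ⟨s0, hs0, rfl⟩ rr hrr
          rw [← hcomp] at hrr
          obtain ⟨r0, hr0, rfl⟩ := hrr
          obtain ⟨u, hu, v, hv, huv⟩ := hgood s0 hs0 r0 hr0
          refine ⟨π u, ?_, π v, ⟨v, hv, rfl⟩, by rw [← map_mul, ← map_mul, huv]⟩
          rw [← hcomp]
          exact ⟨u, hu, rfl⟩
      · refine ⟨π x, ⟨x, hxT, rfl⟩, ?_⟩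
        have hm : π x ∈ AddSubgroup.map π.toAddMonoidHom (⨆ k, ⨆ _ : k ≥ (1 : ℤ), gR k) :=
          AddSubgroup.mem_map_of_mem _ hxpos
        rw [hmap_biSup] at hm
        simp only [← hgS] at hm
        exact hm
    · -- the covering condition
      intro xf hxf
      have hyfex : ∀ T ∈ 𝒮, ∃ u ∈ T, π u = xf (π '' T) := by
        intro T hT
        exact hxf (π '' T) ⟨T, hT, rfl⟩
      set yf : Set R → R := fun U =>
        if h : ∃ u ∈ U, π u = xf (π '' U) then h.choose else 1 with hyf
      have hyfP : ∀ T ∈ 𝒮, yf T ∈ T ∧ π (yf T) = xf (π '' T) := by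
        intro T hT
        have h := hyfex T hT
        rw [hyf]
        simp only [dif_pos h]
        exact ⟨h.choose_spec.1, h.choose_spec.2⟩
      obtain ⟨t, m, hcov⟩ := h𝒮sch yf fun T hT => (hyfP T hT).1
      refine ⟨t, m, ?_⟩
      intro z hz
      have h1 : z ∈ SG.idealPow (Ideal.map π (SG.geIdeal gR t)) m :=
        sg_idealPow_mono (geLe t) m hz
      have h2 : z ∈ Ideal.map π (SG.idealPow (SG.geIdeal gR t) m) :=
        sg_idealPow_map_le π hπ _ m h1
      have h3 : Ideal.map π (SG.idealPow (SG.geIdeal gR t) m)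
          ≤ Ideal.map π (⨆ T ∈ 𝒮, Ideal.span {yf T}) :=
        Ideal.map_mono fun w hw => hcov hw
      have h4 : Ideal.map π (⨆ T ∈ 𝒮, Ideal.span {yf T})
          ≤ ⨆ T' ∈ (fun T => π '' T) '' 𝒮, Ideal.span {xf T'} := by
        rw [(Ideal.gc_map_comap π).l_iSup]
        refine iSup_le fun T => ?_
        rw [(Ideal.gc_map_comap π).l_iSup]
        refine iSup_le fun hT => ?_
        have hspan : Ideal.map π (Ideal.span {yf T}) = Ideal.span {xf (π '' T)} := by
          rw [Ideal.map_span, Set.image_singleton, (hyfP T hT).2]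
        rw [hspan]
        exact le_iSup₂ (f := fun (T' : Set S) (_ : T' ∈ (fun T => π '' T) '' 𝒮) =>
          Ideal.span {xf T'}) (π '' T) ⟨T, hT, rfl⟩
      exact h4 (h3 h2)
end

section
/- Let R be a positively SG left Noetherian ring. Let N be an LSG R-module and N' an SG submodule of N such that N/N' is torsion. Let E be an LSG R-module containing an SG submodule E' such that E/E' is torsion, and suppose the semigraduation of E satisfies the following characterization: for every ξ ∈ E and every k ∈ ℤ, ξ ∈ E_k if and only if there exist n, t ∈ ℕ with (R_{≥t})^n·ξ ⊆ E' and, for every s ∈ (R_{≥t})^n ∩ R' (such s is homogeneous, say of degree deg s), s·ξ ∈ E_{k+deg s} ∩ E'. If f : N' → E is a homogeneous R-linear map and g : N → E is any R-linear map extending f, then g is homogeneous. -/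
open Pointwise

lemma idealPow_succ_le' {R : Type*} [Ring R] (I : Ideal R) (n : ℕ) :
    SG.idealPow I (n + 1) ≤ SG.idealPow I n := by
  cases n with
  | zero => exact le_top
  | succ m =>
    show Submodule.span R _ ≤ _
    rw [Submodule.span_le]
    rintro x ⟨a, _, b, hb, rfl⟩
    simpa [smul_eq_mul] using Submodule.smul_mem (SG.idealPow I (m + 1)) a hb

lemma idealPow_antitone' {R : Type*} [Ring R] (I : Ideal R) :
    Antitone (SG.idealPow I) :=
  antitone_nat_of_succ_le (idealPow_succ_le' I)

lemma idealPow_mono' {R : Type*} [Ring R] {I J : Ideal R} (h : I ≤ J) (n : ℕ) :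
    SG.idealPow I n ≤ SG.idealPow J n := by
  induction n with
  | zero => exact le_rfl
  | succ m ih =>
    show Submodule.span R _ ≤ Submodule.span R _
    exact Submodule.span_mono (Set.mul_subset_mul h ih)

lemma geIdeal_antitone' {R : Type*} [Ring R] (gR : ℤ → AddSubgroup R) :
    Antitone (SG.geIdeal gR) := by
  intro t₁ t₂ h
  apply sInf_le_sInf
  rintro I ⟨h1, h2, h3⟩
  exact ⟨h1, h2, fun k hk => h3 k (le_trans (by exact_mod_cast h) hk)⟩

/-- any `R`-linear extension of a homogeneous map defined on an SG submodule
with torsion quotient, into a module `E` whose semigraduation has the stated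
characterization relative to an SG submodule `E'` with torsion quotient, is homogeneous. -/
theorem stmt_6 {R N E : Type*} [Ring R]
    [AddCommGroup N] [Module R N] [AddCommGroup E] [Module R E]
    (gR : ℤ → AddSubgroup R) (gN : ℤ → AddSubgroup N) (gE : ℤ → AddSubgroup E)
    (hR : SG.IsSGRing gR) (hpos : ∀ n : ℤ, n < 0 → gR n = ⊥)
    (hnoe : IsNoetherian R R)
    (hN : SG.IsLSG gR gN) (N' : Submodule R N) (hN' : SG.IsSGSubmodule gN N')
    (htorsN : ∀ x : N ⧸ N', SG.IsTorsionElem gR x)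
    (hE : SG.IsLSG gR gE) (E' : Submodule R E) (hE' : SG.IsSGSubmodule gE E')
    (htorsE : ∀ x : E ⧸ E', SG.IsTorsionElem gR x)
    (hchar : ∀ (ξ : E) (k : ℤ), ξ ∈ gE k ↔
      ∃ n t : ℕ, (∀ y ∈ SG.idealPow (SG.geIdeal gR t) n, y • ξ ∈ E') ∧
        ∀ s ∈ SG.idealPow (SG.geIdeal gR t) n, ∀ d : ℤ, s ∈ SG.RprimeN gR d →
          s • ξ ∈ gE (k + d) ∧ s • ξ ∈ E')
    (f : N' →ₗ[R] E) (hf : ∀ k : ℤ, ∀ x : N', (x : N) ∈ gN k → f x ∈ gE k)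
    (g : N →ₗ[R] E) (hg : ∀ x : N', g (x : N) = f x) :
    ∀ k : ℤ, ∀ x ∈ gN k, g x ∈ gE k := by
  intro k x hx
  obtain ⟨t₁, n₁, h₁⟩ := htorsN (Submodule.Quotient.mk x)
  obtain ⟨t₂, n₂, h₂⟩ := htorsE (Submodule.Quotient.mk (g x))
  rw [hchar]
  refine ⟨max n₁ n₂, max t₁ t₂, ?_, ?_⟩
  · -- first condition: y • g x ∈ E'
    intro y hy
    have hy₂ : y ∈ SG.idealPow (SG.geIdeal gR t₂) n₂ :=
      idealPow_mono' (geIdeal_antitone' gR (le_max_right t₁ t₂)) _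
        (idealPow_antitone' _ (le_max_right n₁ n₂) hy)
    have := h₂ y hy₂
    rw [← Submodule.Quotient.mk_smul, Submodule.Quotient.mk_eq_zero] at this
    exact this
  · intro s hs d hsd
    have hs₁ : s ∈ SG.idealPow (SG.geIdeal gR t₁) n₁ :=
      idealPow_mono' (geIdeal_antitone' gR (le_max_left t₁ t₂)) _
        (idealPow_antitone' _ (le_max_left n₁ n₂) hs)
    have hs₂ : s ∈ SG.idealPow (SG.geIdeal gR t₂) n₂ :=
      idealPow_mono' (geIdeal_antitone' gR (le_max_right t₁ t₂)) _
        (idealPow_antitone' _ (le_max_right n₁ n₂) hs)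
    -- s • x ∈ N'
    have hsxN' : s • x ∈ N' := by
      have := h₁ s hs₁
      rw [← Submodule.Quotient.mk_smul, Submodule.Quotient.mk_eq_zero] at this
      exact this
    -- s • x ∈ gN (k + d)
    have hsxg : s • x ∈ gN (k + d) := by
      have := hN.2 d k s hsd x hx
      rwa [add_comm d k] at this
    -- s • g x = g (s • x) = f ⟨s • x, _⟩ ∈ gE (k + d)
    have hmem : s • g x ∈ gE (k + d) := by
      have h3 : g (s • x) = f ⟨s • x, hsxN'⟩ := hg ⟨s • x, hsxN'⟩
      have h4 : f ⟨s • x, hsxN'⟩ ∈ gE (k + d) := hf (k + d) ⟨s • x, hsxN'⟩ hsxg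
      rw [← map_smul g s x, h3]
      exact h4
    -- s • g x ∈ E'
    have hmem' : s • g x ∈ E' := by
      have := h₂ s hs₂
      rw [← Submodule.Quotient.mk_smul, Submodule.Quotient.mk_eq_zero] at this
      exact this
    exact ⟨hmem, hmem'⟩
end

section
/- Let R be an SG ring, J an SG ideal of R, and g : M → N a homogeneous R-linear map between SG left R-modules. Then g(f^!(M)) ⊆ f^!(N), where f^!(M) and f^!(N) denote the largest SG submodules of M and N annihilated by J. -/
open Pointwise

/-- a homogeneous `R`-linear map sends `f^!(M)` into `f^!(N)`. -/
theorem stmt_9 {R M N : Type*} [Ring R] [AddCommGroup M] [Module R M]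
    [AddCommGroup N] [Module R N]
    (gR : ℤ → AddSubgroup R) (gM : ℤ → AddSubgroup M) (gN : ℤ → AddSubgroup N)
    (hR : SG.IsSGRing gR) (hM : SG.IsSGModule gR gM) (hN : SG.IsSGModule gR gN)
    (J : Ideal R) (hJ2 : SG.IsTwoSided J) (hJsg : SG.IsSGSubmodule gR J)
    (g : M →ₗ[R] N) (hg : ∀ n : ℤ, ∀ x ∈ gM n, g x ∈ gN n) :
    Submodule.map g (SG.fShriek gM J) ≤ SG.fShriek gN J := by
  rw [SG.fShriek, sSup_eq_iSup]
  simp only [Submodule.map_iSup]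
  apply iSup₂_le
  rintro P ⟨hPsg, hPann⟩
  apply le_sSup
  constructor
  · -- map g P is an SG submodule w.r.t. gN
    apply le_antisymm
    · intro y hy
      obtain ⟨x, hx, rfl⟩ := hy
      have hx' : x ∈ ⨆ n : ℤ, (gM n ⊓ P.toAddSubgroup) := by
        rw [← hPsg]; exact hx
      have : g x ∈ AddSubgroup.map g.toAddMonoidHom (⨆ n : ℤ, (gM n ⊓ P.toAddSubgroup)) :=
        ⟨x, hx', rfl⟩
      rw [AddSubgroup.map_iSup] at this
      have hle : (⨆ n : ℤ, AddSubgroup.map g.toAddMonoidHom (gM n ⊓ P.toAddSubgroup)) ≤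
          ⨆ n : ℤ, (gN n ⊓ (Submodule.map g P).toAddSubgroup) := by
        refine iSup_mono fun n => ?_
        rintro z ⟨w, ⟨hwn, hwP⟩, rfl⟩
        exact ⟨hg n w hwn, ⟨w, hwP, rfl⟩⟩
      exact hle this
    · exact iSup_le fun n => inf_le_right
  · rintro j hj y ⟨x, hx, rfl⟩
    rw [← map_smul, hPann j hj x hx, map_zero]
end

section
/- Let R be an SG ring, J an SG ideal of R, and M an SG left R-module. Then f^*(M) := M/⟨J·M⟩^SG is an SG left R/J-module under the well-defined action (r+J)·(m + ⟨JM⟩^SG) := r·m + ⟨JM⟩^SG, with semigraduation (f^*(M))_n = (M_n + ⟨JM⟩^SG)/⟨JM⟩^SG. -/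
open Pointwise

/-!
With respect to an internal decomposition, a submodule is semi-graded exactly when it is
homogeneous, i.e. closed under taking components; homogeneity is preserved by intersections, so
`⟨JM⟩^SG` is semi-graded. For a surjection `φ` with homogeneous kernel the images `φ(Mₙ)` again
form an internal direct sum: if `∑ φ(xₙ) = 0` with `xₙ ∈ Mₙ`, then `∑ xₙ ∈ ker φ`, so each `xₙ`
lies in `ker φ`. The action of `R/J` is well defined since `(r - r')m ∈ JM ⊆ ⟨JM⟩^SG`, and the
semi-graded condition on the quotient is the image of the one on `M`.
-/

open DirectSum

namespace DirectSum

variable {ι M N : Type*} [DecidableEq ι] [AddCommGroup M] [AddCommGroup N]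
  (ℳ : ι → AddSubgroup M) [Decomposition ℳ]

theorem isHomogeneous_iff_eq_iSup_inf (P : AddSubgroup M) :
    SetLike.IsHomogeneous ℳ P ↔ P = ⨆ i, ℳ i ⊓ P := by
  classical
  refine ⟨fun hP => le_antisymm (fun x hx => ?_) (iSup_le fun _ => inf_le_right), fun hP => ?_⟩
  · rw [AddSubmonoidClass.IsHomogeneous.mem_iff ℳ P hP] at hx
    rw [← sum_support_decompose ℳ x]
    exact sum_mem fun i _ => AddSubgroup.mem_iSup_of_mem i ⟨(decompose ℳ x i).2, hx i⟩
  · intro i x hx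
    rw [hP] at hx
    induction hx using AddSubgroup.iSup_induction' with
    | hp j y hy =>
      obtain rfl | hji := eq_or_ne j i
      · rw [decompose_of_mem_same ℳ hy.1]
        exact hy.2
      · rw [decompose_of_mem_ne ℳ hy.1 hji]
        exact zero_mem _
    | h1 => simp
    | hadd y z _ _ hy hz => simpa using add_mem hy hz

omit [Decomposition ℳ] in
theorem coeAddMonoidHom_map_addSubgroupMap (φ : M →+ N) (x : ⨁ i, ℳ i) :
    DirectSum.coeAddMonoidHom (fun i => (ℳ i).map φ) (map (fun i => φ.addSubgroupMap (ℳ i)) x) =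
      φ (DirectSum.coeAddMonoidHom ℳ x) := by
  induction x using DirectSum.induction_on with
  | zero => simp
  | of i y => rw [map_of, coeAddMonoidHom_of, coeAddMonoidHom_of]; rfl
  | add y z hy hz => simp [hy, hz]

theorem isInternal_map_of_isHomogeneous_ker {φ : M →+ N} (hφ : Function.Surjective φ)
    (hker : SetLike.IsHomogeneous ℳ φ.ker) : IsInternal fun i => (ℳ i).map φ := by
  set Φ := map fun i => φ.addSubgroupMap (ℳ i)
  refine ⟨(injective_iff_map_eq_zero _).2 fun f hf => ?_, fun y => ?_⟩
  · obtain ⟨g, rfl⟩ := (map_surjective _).2 (fun i => φ.addSubgroupMap_surjective (ℳ i)) f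
    have hg : DirectSum.coeAddMonoidHom ℳ g ∈ φ.ker := by
      rwa [AddMonoidHom.mem_ker, ← coeAddMonoidHom_map_addSubgroupMap]
    have hdec : decompose ℳ (DirectSum.coeAddMonoidHom ℳ g) = g :=
      (decompose ℳ).apply_symm_apply g
    have hgi : ∀ i, (g i : M) ∈ φ.ker := hdec ▸ fun i => hker i hg
    ext i
    exact hgi i
  · obtain ⟨x, rfl⟩ := hφ y
    exact ⟨Φ (decompose ℳ x), by
      rw [coeAddMonoidHom_map_addSubgroupMap]; exact congrArg φ ((decompose ℳ).symm_apply_apply x)⟩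

end DirectSum

namespace SG

variable {R M : Type*} [Ring R] [AddCommGroup M] [Module R M] {gM : ℤ → AddSubgroup M}

theorem isSGSubmodule_iff_isHomogeneous [Decomposition gM] (P : Submodule R M) :
    IsSGSubmodule gM P ↔ SetLike.IsHomogeneous gM P :=
  (isHomogeneous_iff_eq_iSup_inf gM P.toAddSubgroup).symm

theorem subset_sgSpan (X : Set M) : X ⊆ sgSpan (R := R) gM X :=
  fun _ hx => Submodule.mem_sInf.2 fun _ hP => hP.2 hx

theorem isSGSubmodule_sgSpan (h : IsInternal gM) (X : Set M) :
    IsSGSubmodule gM (sgSpan (R := R) gM X) := by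
  let := h.chooseDecomposition
  refine (isSGSubmodule_iff_isHomogeneous _).2 fun i x hx => Submodule.mem_sInf.2 fun P hP => ?_
  exact (isSGSubmodule_iff_isHomogeneous P).1 hP.1 i (Submodule.mem_sInf.1 hx P hP)

theorem isInternal_quotGrade (h : IsInternal gM) {K : Submodule R M}
    (hK : IsSGSubmodule gM K) : IsInternal (quotGrade gM K) := by
  let := h.chooseDecomposition
  refine isInternal_map_of_isHomogeneous_ker gM K.mkQ_surjective ?_
  rw [← LinearMap.ker_toAddSubgroup, Submodule.ker_mkQ]
  exact (isSGSubmodule_iff_isHomogeneous K).1 hK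

theorem IsSGModule.quotient {gR : ℤ → AddSubgroup R} (hM : IsSGModule gR gM)
    {K : Submodule R M} (hK : IsSGSubmodule gM K) : IsSGModule gR (quotGrade gM K) := by
  refine ⟨isInternal_quotGrade hM.1 hK, ?_⟩
  rintro m n hm r hr _ ⟨x, hx, rfl⟩
  have := AddSubgroup.mem_map_of_mem K.mkQ.toAddMonoidHom (hM.2 m n hm r hr x hx)
  rwa [(AddSubgroup.gc_map_comap _).l_iSup₂] at this

theorem smul_eq_smul_of_sub_mem {J : Ideal R} {r r' : R} (h : r - r' ∈ J)
    (y : M ⧸ sgSpan (R := R) gM ((J : Set R) • Set.univ)) : r • y = r' • y := by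
  induction y using Submodule.Quotient.induction_on with
  | H m =>
    rw [← Submodule.Quotient.mk_smul, ← Submodule.Quotient.mk_smul, Submodule.Quotient.eq,
      ← sub_smul]
    exact subset_sgSpan _ (Set.smul_mem_smul h (Set.mem_univ m))

end SG

/-- `R/J` is modelled by a ring homomorphism `π : R →+* S` with kernel `J`, semi-graded by the
images `gS n = π(Rₙ)`. -/
theorem stmt_11_general {R S M : Type*} [Ring R] [Ring S] [AddCommGroup M] [Module R M]
    (gR : ℤ → AddSubgroup R) (gS : ℤ → AddSubgroup S) (gM : ℤ → AddSubgroup M)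
    (π : R →+* S)
    (hgS : ∀ n : ℤ, gS n = (gR n).map π.toAddMonoidHom)
    (J : Ideal R) (hJ : J = RingHom.ker π)
    (hM : SG.IsSGModule gR gM) :
    (∀ r r' : R, π r = π r' → ∀ m : M,
      (Submodule.Quotient.mk (r • m) :
          M ⧸ SG.sgSpan (R := R) gM ((J : Set R) • (Set.univ : Set M))) =
        Submodule.Quotient.mk (r' • m)) ∧
    DirectSum.IsInternal (SG.quotGrade (R := R) gM
      (SG.sgSpan (R := R) gM ((J : Set R) • (Set.univ : Set M)))) ∧
    (∀ a : ℤ, 0 ≤ a → ∀ b : ℤ, ∀ r : R, π r ∈ gS a →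
      ∀ y ∈ SG.quotGrade (R := R) gM
          (SG.sgSpan (R := R) gM ((J : Set R) • (Set.univ : Set M))) b,
        r • y ∈ ⨆ c ≤ a + b, SG.quotGrade (R := R) gM
          (SG.sgSpan (R := R) gM ((J : Set R) • (Set.univ : Set M))) c) := by
  have hsub : ∀ {r r' : R}, π r = π r' → r - r' ∈ J := fun h =>
    hJ ▸ (RingHom.sub_mem_ker_iff π).2 h
  have hQ := hM.quotient (SG.isSGSubmodule_sgSpan hM.1 ((J : Set R) • Set.univ))
  refine ⟨fun r r' h m => SG.smul_eq_smul_of_sub_mem (hsub h) (Submodule.Quotient.mk m), hQ.1,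
    fun a ha b r hr y hy => ?_⟩
  obtain ⟨r₀, hr₀, hπ⟩ := (hgS a).le hr
  rw [SG.smul_eq_smul_of_sub_mem (hsub hπ.symm) y]
  exact hQ.2 a b ha r₀ hr₀ y hy

/-- `f^*(M) = M/⟨J·M⟩^SG` is a semi-graded `R/J`-module: the action
`(r+J)·(m+⟨JM⟩^SG) := r·m+⟨JM⟩^SG` is well defined, the induced semigraduation
`(f^*(M))ₙ = (Mₙ + ⟨JM⟩^SG)/⟨JM⟩^SG` is an internal direct sum, and the semi-graded
module condition holds.  `R/J` is modelled by a surjective ring homomorphism `π : R → S`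
with kernel `J` and quotient semigraduation `gS`. -/
theorem stmt_11 {R S M : Type*} [Ring R] [Ring S] [AddCommGroup M] [Module R M]
    (gR : ℤ → AddSubgroup R) (gS : ℤ → AddSubgroup S) (gM : ℤ → AddSubgroup M)
    (hR : SG.IsSGRing gR) (π : R →+* S) (hπ : Function.Surjective π)
    (hgS : ∀ n : ℤ, gS n = (gR n).map π.toAddMonoidHom)
    (J : Ideal R) (hJ : J = RingHom.ker π) (hJsg : SG.IsSGSubmodule gR J)
    (hM : SG.IsSGModule gR gM) :
    (∀ r r' : R, π r = π r' → ∀ m : M,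
      (Submodule.Quotient.mk (r • m) :
          M ⧸ SG.sgSpan (R := R) gM ((J : Set R) • (Set.univ : Set M))) =
        Submodule.Quotient.mk (r' • m)) ∧
    DirectSum.IsInternal (SG.quotGrade (R := R) gM
      (SG.sgSpan (R := R) gM ((J : Set R) • (Set.univ : Set M)))) ∧
    (∀ a : ℤ, 0 ≤ a → ∀ b : ℤ, ∀ r : R, π r ∈ gS a →
      ∀ y ∈ SG.quotGrade (R := R) gM
          (SG.sgSpan (R := R) gM ((J : Set R) • (Set.univ : Set M))) b,
        r • y ∈ ⨆ c ≤ a + b, SG.quotGrade (R := R) gM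
          (SG.sgSpan (R := R) gM ((J : Set R) • (Set.univ : Set M))) c) :=
  stmt_11_general gR gS gM π hgS J hJ hM
end

section
/- Let R be an SG left Noetherian ring, S a good left Ore set of R, and J a compatible SG ideal of R. Then the image S̄ = {s + J : s ∈ S} of S in R/J is a good left Ore set of R/J; that is, S̄ is a multiplicatively closed subset of R/J satisfying the left Ore condition, S̄ ⊆ (R/J)'', and for every s̄ ∈ S̄ and r̄ ∈ (R/J)' there exist ū ∈ (R/J)' and v̄ ∈ S̄ with ū·s̄ = v̄·r̄. -/
open Pointwise

/-- the image of a good left Ore set under the quotient map by a compatible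
SG ideal is a good left Ore set of the quotient.  `R/J` is modelled by a surjective ring
homomorphism `π : R → S` with SG kernel, quotient semigraduation `gS`, and compatibility
`π(R') = S'`. -/
theorem stmt_12 {R S : Type*} [Ring R] [Ring S]
    (gR : ℤ → AddSubgroup R) (gS : ℤ → AddSubgroup S)
    (hR : SG.IsSGRing gR) (hnoe : IsNoetherian R R)
    (π : R →+* S) (hπ : Function.Surjective π)
    (hgS : ∀ n : ℤ, gS n = (gR n).map π.toAddMonoidHom)
    (hJsg : SG.IsSGSubmodule gR (RingHom.ker π))
    (hcomp : π '' SG.Rprime gR = SG.Rprime gS)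
    (T : Set R) (hT : SG.IsGoodOre gR T) :
    SG.IsGoodOre gS (π '' T) := by
  obtain ⟨⟨h1, hmul, hore⟩, hTd, hTgood⟩ := hT
  refine ⟨⟨⟨1, h1, map_one π⟩, ?_, ?_⟩, ?_, ?_⟩
  · rintro _ ⟨a, ha, rfl⟩ _ ⟨b, hb, rfl⟩
    exact ⟨a * b, hmul a ha b hb, map_mul π a b⟩
  · rintro r _ ⟨s, hs, rfl⟩
    obtain ⟨r0, rfl⟩ := hπ r
    obtain ⟨r', s', hs', heq⟩ := hore r0 s hs
    exact ⟨π r', π s', ⟨s', hs', rfl⟩, by rw [← map_mul, ← map_mul, heq]⟩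
  · rintro _ ⟨s, hs, rfl⟩
    obtain ⟨n, hn⟩ := Set.mem_iUnion.mp (hTd hs)
    refine Set.mem_iUnion.mpr ⟨n, ⟨⟨?_, ?_⟩, ?_⟩⟩
    · rw [hgS]; exact ⟨s, hn.1.1, rfl⟩
    · intro m h hh
      rw [hgS] at hh
      obtain ⟨h0, hh0, rfl⟩ := hh
      rw [hgS]
      exact ⟨s * h0, hn.1.2 m h0 hh0, by simp [map_mul]⟩
    · intro m h hh
      rw [hgS] at hh
      obtain ⟨h0, hh0, rfl⟩ := hh
      rw [hgS]
      exact ⟨h0 * s, hn.2 m h0 hh0, by simp [map_mul]⟩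
  · rintro _ ⟨s, hs, rfl⟩ r hr
    rw [← hcomp] at hr
    obtain ⟨r0, hr0, rfl⟩ := hr
    obtain ⟨u, hu, v, hv, heq⟩ := hTgood s hs r0 hr0
    exact ⟨π u, hcomp ▸ ⟨u, hu, rfl⟩, π v, ⟨v, hv, rfl⟩,
      by rw [← map_mul, ← map_mul, heq]⟩
end

section
/- Let R be a positively SG left Noetherian ring and J a compatible SG ideal of R. Then for every n ∈ ℕ, the image of the ideal R_{≥n} under the quotient map R → R/J equals the ideal (R/J)_{≥n} computed in the SG ring R/J; that is, (R_{≥n} + J)/J = (R/J)_{≥n}. -/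
open Pointwise

/-! `R_{≥n}` is the least member of the family of two-sided semi-graded ideals containing
`⊕_{k ≥ n} R_k`: an intersection of semi-graded submodules is again semi-graded, because a
submodule is semi-graded exactly when it contains the homogeneous components of its elements.
Pushing ideals forward along `π` and pulling them back along `π` both preserve these families
(pulling back needs the kernel of `π` to be semi-graded), hence `π(R_{≥n})` is the least member
of the corresponding family of `S`, which is `S_{≥n}`. -/

theorem Ideal.coe_map_of_surjective {R S : Type*} [Ring R] [Ring S] {π : R →+* S}
    (hπ : Function.Surjective π) (I : Ideal R) : (I.map π : Set S) = π '' I :=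
  Set.ext fun _ => Ideal.mem_map_iff_of_surjective π hπ

theorem Ideal.toAddSubgroup_map_of_surjective {R S : Type*} [Ring R] [Ring S] {π : R →+* S}
    (hπ : Function.Surjective π) (I : Ideal R) :
    (I.map π).toAddSubgroup = I.toAddSubgroup.map π.toAddMonoidHom :=
  SetLike.coe_injective (Ideal.coe_map_of_surjective hπ I)

namespace SG

open DirectSum

section Decomposition

variable {R M : Type*} [Ring R] [AddCommGroup M] [Module R M] {gM : ℤ → AddSubgroup M}

theorem isSGSubmodule_iff_decompose_mem [Decomposition gM] (P : Submodule R M) :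
    IsSGSubmodule gM P ↔ ∀ x ∈ P, ∀ k, (decompose gM x k : M) ∈ P := by
  classical
  constructor
  · intro hP x hx k
    have hx' : x ∈ ⨆ n, gM n ⊓ P.toAddSubgroup := hP ▸ hx
    refine AddSubgroup.iSup_induction _ hx' (C := fun y => (decompose gM y k : M) ∈ P)
      (fun j y hy => ?_) (by simp) (fun y z hy hz => ?_)
    · obtain rfl | hjk := eq_or_ne j k
      · rw [decompose_of_mem_same gM hy.1]
        exact hy.2
      · rw [decompose_of_mem_ne gM hy.1 hjk]
        exact P.zero_mem
    · rw [decompose_add, DirectSum.add_apply, AddSubgroup.coe_add]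
      exact P.add_mem hy hz
  · intro h
    refine le_antisymm (fun x hx => ?_) (iSup_le fun _ => inf_le_right)
    rw [← sum_support_decompose gM x]
    exact AddSubgroup.sum_mem _ fun k _ =>
      AddSubgroup.mem_iSup_of_mem k ⟨(decompose gM x k).2, h x hx k⟩

theorem isSGSubmodule_sInf (hint : IsInternal gM) {Ps : Set (Submodule R M)}
    (hPs : ∀ P ∈ Ps, IsSGSubmodule gM P) : IsSGSubmodule gM (sInf Ps) := by
  let _ := hint.chooseDecomposition
  rw [isSGSubmodule_iff_decompose_mem]
  intro x hx k
  rw [Submodule.mem_sInf] at hx ⊢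
  exact fun P hP => (isSGSubmodule_iff_decompose_mem P).1 (hPs P hP) x (hx P hP) k

end Decomposition

section AddMonoidHom

variable {M N : Type*} [AddCommGroup M] [AddCommGroup N] (f : M →+ N) {ι : Type*}
  (gM : ι → AddSubgroup M)

theorem map_eq_iSup_map_inf {H : AddSubgroup M} (hH : H = ⨆ k, gM k ⊓ H) :
    H.map f = ⨆ k, (gM k).map f ⊓ H.map f := by
  refine le_antisymm ?_ (iSup_le fun _ => inf_le_right)
  conv_lhs => rw [hH, AddSubgroup.map_iSup]
  exact iSup_mono fun k => AddSubgroup.map_inf_le _ _ f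

theorem comap_eq_iSup_inf_comap {K : AddSubgroup N} (hK : K = ⨆ k, (gM k).map f ⊓ K)
    (hker : f.ker = ⨆ k, gM k ⊓ f.ker) :
    K.comap f = ⨆ k, gM k ⊓ K.comap f := by
  refine le_antisymm ?_ (iSup_le fun _ => inf_le_right)
  set A := ⨆ k, gM k ⊓ K.comap f
  have hkerA : f.ker ≤ A :=
    hker.trans_le (iSup_mono fun _ => inf_le_inf_left _ (AddSubgroup.ker_le_comap f K))
  have hKA : K ≤ A.map f := by
    rw [hK]
    refine iSup_le fun k => ?_
    rintro _ ⟨⟨x, hx, rfl⟩, hfx⟩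
    exact ⟨x, AddSubgroup.mem_iSup_of_mem k ⟨hx, hfx⟩, rfl⟩
  calc K.comap f ≤ (A.map f).comap f := AddSubgroup.comap_mono hKA
    _ = A := by rw [AddSubgroup.comap_map_eq, sup_eq_left.2 hkerA]

end AddMonoidHom

section GeIdeal

variable {R S : Type*} [Ring R] [Ring S] {gR : ℤ → AddSubgroup R} {gS : ℤ → AddSubgroup S}
  {t : ℕ}

variable (gR t) in
def geIdealFamily : Set (Ideal R) :=
  {I | IsSGSubmodule gR I ∧ IsTwoSided I ∧
    ∀ k : ℤ, (t : ℤ) ≤ k → gR k ≤ I.toAddSubgroup}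

theorem geIdeal_mem_geIdealFamily (hint : IsInternal gR) :
    geIdeal gR t ∈ geIdealFamily gR t :=
  ⟨isSGSubmodule_sInf hint fun _ hI => hI.1,
    fun _ hx r => Submodule.mem_sInf.2 fun I hI => hI.2.1 _ (Submodule.mem_sInf.1 hx I hI) r,
    fun k hk _ hx => Submodule.mem_sInf.2 fun _ hI => hI.2.2 k hk hx⟩

variable {π : R →+* S}

theorem map_mem_geIdealFamily (hgS : ∀ k, gS k = (gR k).map π.toAddMonoidHom)
    (hπ : Function.Surjective π) {I : Ideal R} (hI : I ∈ geIdealFamily gR t) :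
    I.map π ∈ geIdealFamily gS t := by
  obtain ⟨hSG, htwo, hge⟩ := hI
  refine ⟨?_, ?_, fun k hk => ?_⟩
  · simp only [IsSGSubmodule, hgS, Ideal.toAddSubgroup_map_of_surjective hπ]
    exact map_eq_iSup_map_inf _ gR hSG
  · intro _ hs r
    obtain ⟨x, hx, rfl⟩ := (Ideal.mem_map_iff_of_surjective π hπ).1 hs
    obtain ⟨r, rfl⟩ := hπ r
    rw [← map_mul]
    exact Ideal.mem_map_of_mem π (htwo x hx r)
  · rw [hgS, Ideal.toAddSubgroup_map_of_surjective hπ]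
    exact AddSubgroup.map_mono (hge k hk)

theorem comap_mem_geIdealFamily (hgS : ∀ k, gS k = (gR k).map π.toAddMonoidHom)
    (hker : IsSGSubmodule gR (RingHom.ker π)) {P : Ideal S} (hP : P ∈ geIdealFamily gS t) :
    P.comap π ∈ geIdealFamily gR t := by
  obtain ⟨hSG, htwo, hge⟩ := hP
  refine ⟨?_, fun x hx r => ?_, fun k hk x hx => ?_⟩
  · simp only [IsSGSubmodule, hgS] at hSG
    exact comap_eq_iSup_inf_comap π.toAddMonoidHom gR hSG hker
  · simpa only [Ideal.mem_comap, map_mul] using htwo _ hx (π r)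
  · exact hge k hk (hgS k ▸ AddSubgroup.mem_map_of_mem _ hx)

theorem map_geIdeal (hint : IsInternal gR)
    (hgS : ∀ k, gS k = (gR k).map π.toAddMonoidHom) (hπ : Function.Surjective π)
    (hker : IsSGSubmodule gR (RingHom.ker π)) : (geIdeal gR t).map π = geIdeal gS t :=
  le_antisymm
    (le_sInf fun _ hP => Ideal.map_le_iff_le_comap.2 <|
      sInf_le (comap_mem_geIdealFamily hgS hker hP))
    (sInf_le (map_mem_geIdealFamily hgS hπ (geIdeal_mem_geIdealFamily hint)))

end GeIdeal

end SG

/-- `R/J` is modelled by a surjective ring homomorphism `π : R →+* S` with semi-graded kernel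
`J` and the quotient semigraduation `gS`. -/
theorem stmt_13_general {R S : Type*} [Ring R] [Ring S]
    (gR : ℤ → AddSubgroup R) (gS : ℤ → AddSubgroup S)
    (hR : SG.IsSGRing gR)
    (π : R →+* S) (hπ : Function.Surjective π)
    (hgS : ∀ k : ℤ, gS k = (gR k).map π.toAddMonoidHom)
    (hJsg : SG.IsSGSubmodule gR (RingHom.ker π))
    (n : ℕ) :
    π '' (SG.geIdeal gR n : Set R) = ((SG.geIdeal gS n : Ideal S) : Set S) := by
  rw [← SG.map_geIdeal hR.1 hgS hπ hJsg, Ideal.coe_map_of_surjective hπ]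

/-- for a compatible SG ideal `J` of a positively SG left Noetherian ring,
`(R_{≥n} + J)/J = (R/J)_{≥n}` for all `n ∈ ℕ`.  `R/J` is modelled by a surjective ring
homomorphism `π : R → S` with SG kernel, quotient semigraduation `gS` and compatibility
`π(R') = S'`; the claim is that `π(R_{≥n}) = S_{≥n}`. -/
theorem stmt_13 {R S : Type*} [Ring R] [Ring S]
    (gR : ℤ → AddSubgroup R) (gS : ℤ → AddSubgroup S)
    (hR : SG.IsSGRing gR) (hpos : ∀ k : ℤ, k < 0 → gR k = ⊥)
    (hnoe : IsNoetherian R R)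
    (π : R →+* S) (hπ : Function.Surjective π)
    (hgS : ∀ k : ℤ, gS k = (gR k).map π.toAddMonoidHom)
    (hJsg : SG.IsSGSubmodule gR (RingHom.ker π))
    (hcomp : π '' SG.Rprime gR = SG.Rprime gS)
    (n : ℕ) :
    π '' (SG.geIdeal gR n : Set R) = ((SG.geIdeal gS n : Ideal S) : Set S) :=
  stmt_13_general gR gS hR π hπ hgS hJsg n
end
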